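/- arXiv:2402.18468 — 6 statements merged into one kernel-verified Lean document; each statement's English description precedes it below -/
import Mathlib

section
/- For every integer n ≥ 1 and every x ∈ (-1,1), the principal value (1/π) P.V. ∫_{-1}^{1} T_n(ξ) / (√(1-ξ^2) (x-ξ)) dξ exists and equals -U_{n-1}(x). -/
/-!
Write `Tₙ(ξ) = Tₙ(x) + (ξ - x) q(ξ)`, where `q` is the divided difference of `Tₙ` at `x`. This
splits the integrand into `Tₙ(x)` times the kernel `1 / (√(1 - ξ²) (x - ξ))` minus the integrable
function `q(ξ) / √(1 - ξ²)`. The kernel has the primitive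
`(log (1 - x ξ + √(1 - x²) √(1 - ξ²)) - log |x - ξ|) / √(1 - x²)`, which vanishes at `±1` and whose
only singular part at `x` is the even term `-log |x - ξ|`, so its principal value is `0`.
After `ξ = cos θ` the remaining integral is `∫₀^π q(cos θ) dθ`. The divided differences `q_k` of the
`T_k` satisfy `q_{k+2} = 2x q_{k+1} - q_k + 2 T_{k+1}`, and `∫₀^π T_j(cos θ) dθ = 0` for `j ≠ 0`, so
these integrals follow the recursion of `π U_{k-1}(x)` from the same initial values `0` and `π`.
-/

open Filter Real MeasureTheory Set Topology intervalIntegral Polynomial Polynomial.Chebyshev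

noncomputable section

def pvTruncation (f : ℝ → ℝ) (a b x ε : ℝ) : ℝ :=
  (∫ ξ in a..x - ε, f ξ) + ∫ ξ in x + ε..b, f ξ

theorem tendsto_sub_nhdsGT_zero (x : ℝ) : Tendsto (fun ε => x - ε) (𝓝[>] 0) (𝓝 x) :=
  ((continuous_sub_left x).tendsto' 0 x (sub_zero x)).mono_left nhdsWithin_le_nhds

theorem tendsto_add_nhdsGT_zero (x : ℝ) : Tendsto (fun ε => x + ε) (𝓝[>] 0) (𝓝 x) :=
  ((continuous_const_add x).tendsto' 0 x (add_zero x)).mono_left nhdsWithin_le_nhds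

theorem eventually_pos_sub_add_mem_Ioo {a b x : ℝ} (hx : x ∈ Ioo a b) :
    ∀ᶠ ε in 𝓝[>] (0 : ℝ), 0 < ε ∧ x - ε ∈ Ioo a b ∧ x + ε ∈ Ioo a b := by
  filter_upwards [self_mem_nhdsWithin,
    (tendsto_sub_nhdsGT_zero x).eventually (Ioo_mem_nhds hx.1 hx.2),
    (tendsto_add_nhdsGT_zero x).eventually (Ioo_mem_nhds hx.1 hx.2)] with ε h₀ h₁ h₂
  exact ⟨h₀, h₁, h₂⟩

theorem tendsto_pvTruncation_of_intervalIntegrable {g : ℝ → ℝ} {a b x : ℝ}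
    (hg : IntervalIntegrable g volume a b) (hx : x ∈ Ioo a b) :
    Tendsto (pvTruncation g a b x) (𝓝[>] 0) (𝓝 (∫ ξ in a..b, g ξ)) := by
  have hab : a ≤ b := hx.1.le.trans hx.2.le
  set G : ℝ → ℝ := fun t => ∫ ξ in a..t, g ξ
  have hG : ContinuousAt G x := by
    refine (continuousOn_primitive_interval' hg left_mem_uIcc).continuousAt ?_
    rw [uIcc_of_le hab]
    exact Icc_mem_nhds hx.1 hx.2
  have hlim := (hG.tendsto.comp (tendsto_sub_nhdsGT_zero x)).add
    (tendsto_const_nhds (x := G b) |>.sub (hG.tendsto.comp (tendsto_add_nhdsGT_zero x)))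
  rw [add_sub_cancel] at hlim
  refine hlim.congr' ?_
  filter_upwards [eventually_pos_sub_add_mem_Ioo hx] with ε hε
  have hr : x + ε ∈ uIcc a b := by rw [uIcc_of_le hab]; exact Ioo_subset_Icc_self hε.2.2
  simp only [pvTruncation, Function.comp, G]
  rw [integral_interval_sub_left hg (hg.mono_set (uIcc_subset_uIcc_left hr))]

theorem intervalIntegrable_one_div_sqrt_one_sub_sq :
    IntervalIntegrable (fun ξ : ℝ => 1 / √(1 - ξ ^ 2)) volume (-1) 1 :=
  (intervalIntegrable_iff_integrableOn_Ioc_of_le (by norm_num)).2 <|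
    integrableOn_deriv_of_nonneg continuous_arcsin.continuousOn
      (fun _ hξ => hasDerivAt_arcsin hξ.1.ne' hξ.2.ne) fun _ _ => by positivity

theorem ContinuousOn.intervalIntegrable_div_sqrt_one_sub_sq {h : ℝ → ℝ} {a b : ℝ}
    (ha : a ∈ Icc (-1) 1) (hb : b ∈ Icc (-1) 1) (hh : ContinuousOn h (uIcc a b)) :
    IntervalIntegrable (fun ξ => h ξ / √(1 - ξ ^ 2)) volume a b := by
  have hsub : uIcc a b ⊆ uIcc (-1) 1 := by
    rw [uIcc_of_le (by norm_num : (-1 : ℝ) ≤ 1)]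
    exact uIcc_subset_Icc ha hb
  simpa only [mul_one_div] using
    (intervalIntegrable_one_div_sqrt_one_sub_sq.mono_set hsub).continuousOn_mul hh

theorem integral_div_sqrt_one_sub_sq_eq_integral_cos (h : ℝ → ℝ) :
    ∫ ξ in (-1)..1, h ξ / √(1 - ξ ^ 2) = ∫ θ in 0..π, h (cos θ) := by
  have hsubst := integral_image_eq_integral_abs_deriv_smul measurableSet_Icc
    (fun θ _ => (hasDerivAt_cos θ).hasDerivWithinAt) injOn_cos fun ξ => h ξ / √(1 - ξ ^ 2)
  rw [bijOn_cos.image_eq] at hsubst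
  rw [integral_of_le (by norm_num), integral_of_le pi_pos.le, ← integral_Icc_eq_integral_Ioc,
    hsubst, integral_Icc_eq_integral_Ioo, integral_Ioc_eq_integral_Ioo]
  refine setIntegral_congr_fun measurableSet_Ioo fun θ hθ => ?_
  have hsin : 0 < sin θ := sin_pos_of_pos_of_lt_pi hθ.1 hθ.2
  simp only [← sin_eq_sqrt_one_sub_cos_sq hθ.1.le hθ.2.le, abs_neg, abs_of_pos hsin, smul_eq_mul]
  field_simp

namespace Polynomial

variable {R : Type*} [CommRing R]

def divDiff (p : R[X]) (x : R) : R[X] :=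
  (p - C (p.eval x)) /ₘ (X - C x)

theorem X_sub_C_mul_divDiff (p : R[X]) (x : R) : (X - C x) * p.divDiff x = p - C (p.eval x) :=
  mul_divByMonic_eq_iff_isRoot.2 (by simp)

theorem divDiff_eq_iff {p q : R[X]} {x : R} :
    p.divDiff x = q ↔ (X - C x) * q = p - C (p.eval x) :=
  ⟨fun h => h ▸ X_sub_C_mul_divDiff p x,
    fun h => (monic_X_sub_C x).isRegular.left ((X_sub_C_mul_divDiff p x).trans h.symm)⟩

theorem sub_mul_eval_divDiff (p : R[X]) (x ξ : R) :
    (ξ - x) * (p.divDiff x).eval ξ = p.eval ξ - p.eval x := by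
  simpa using congrArg (eval ξ) (X_sub_C_mul_divDiff p x)

theorem divDiff_T_zero (x : R) : (T R 0).divDiff x = 0 :=
  divDiff_eq_iff.2 (by simp)

theorem divDiff_T_one (x : R) : (T R 1).divDiff x = 1 :=
  divDiff_eq_iff.2 (by simp)

theorem divDiff_T_add_two (k : ℤ) (x : R) :
    (T R (k + 2)).divDiff x =
      2 * C x * (T R (k + 1)).divDiff x - (T R k).divDiff x + 2 * T R (k + 1) := by
  have hC : C ((T R (k + 2)).eval x) =
      2 * C x * C ((T R (k + 1)).eval x) - C ((T R k).eval x) := by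
    simp only [T_add_two, eval_sub, eval_mul, eval_X, eval_ofNat, map_sub, map_mul, map_ofNat]
  rw [divDiff_eq_iff]
  linear_combination 2 * C x * X_sub_C_mul_divDiff (T R (k + 1)) x - X_sub_C_mul_divDiff (T R k) x
    - T_add_two R k + hC

end Polynomial

def chebyshevIntegral : ℝ[X] →ₗ[ℝ] ℝ where
  toFun p := ∫ ξ in (-1)..1, p.eval ξ / √(1 - ξ ^ 2)
  map_add' p q := by
    simp only [eval_add, add_div]
    exact integral_add (p.continuous.continuousOn.intervalIntegrable_div_sqrt_one_sub_sq
      (by norm_num) (by norm_num)) (q.continuous.continuousOn.intervalIntegrable_div_sqrt_one_sub_sq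
      (by norm_num) (by norm_num))
  map_smul' c p := by
    simp only [eval_smul, smul_eq_mul, mul_div_assoc, intervalIntegral.integral_const_mul,
      RingHom.id_apply]

theorem chebyshevIntegral_eq_integral_cos (p : ℝ[X]) :
    chebyshevIntegral p = ∫ θ in 0..π, p.eval (cos θ) :=
  integral_div_sqrt_one_sub_sq_eq_integral_cos _

theorem chebyshevIntegral_one : chebyshevIntegral 1 = π := by
  simp [chebyshevIntegral_eq_integral_cos]

theorem chebyshevIntegral_T {j : ℤ} (hj : j ≠ 0) : chebyshevIntegral (T ℝ j) = 0 := by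
  simp only [chebyshevIntegral_eq_integral_cos, T_real_cos]
  rw [integral_comp_mul_left cos (Int.cast_ne_zero.2 hj), integral_cos]
  simp [sin_int_mul_pi]

theorem chebyshevIntegral_divDiff_T (x : ℝ) (k : ℕ) :
    chebyshevIntegral ((T ℝ k).divDiff x) = π * (U ℝ (k - 1)).eval x := by
  induction k using Nat.twoStepInduction with
  | zero => rw [Nat.cast_zero, divDiff_T_zero]; simp
  | one => rw [Nat.cast_one, divDiff_T_one, chebyshevIntegral_one]; simp
  | more k ih₀ ih₁ =>
    have hU : U ℝ ((k + 2 : ℕ) - 1) = 2 * X * U ℝ ((k + 1 : ℕ) - 1) - U ℝ (k - 1) := by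
      rw [show ((k + 2 : ℕ) : ℤ) - 1 = k - 1 + 2 by push_cast; ring,
        show ((k + 1 : ℕ) : ℤ) - 1 = k - 1 + 1 by push_cast; ring, U_add_two]
    have hrec : (T ℝ (k + 2 : ℕ)).divDiff x =
        (2 * x) • (T ℝ (k + 1 : ℕ)).divDiff x - (T ℝ k).divDiff x + (2 : ℝ) • T ℝ (k + 1 : ℕ) := by
      push_cast
      rw [divDiff_T_add_two, smul_eq_C_mul, smul_eq_C_mul, Polynomial.C_mul, map_ofNat]
    rw [hrec, map_add, map_sub, map_smul, map_smul, ih₀, ih₁, chebyshevIntegral_T (by omega), hU]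
    simp only [eval_sub, eval_mul, eval_X, eval_ofNat, smul_eq_mul]
    ring

def cauchyKernel (x ξ : ℝ) : ℝ :=
  1 / (√(1 - ξ ^ 2) * (x - ξ))

/-- `Real.log` is `log |·|`, so this is a primitive of `cauchyKernel x` on both sides of `x`. -/
def cauchyKernelPrimitive (x ξ : ℝ) : ℝ :=
  (log (1 - x * ξ + √(1 - x ^ 2) * √(1 - ξ ^ 2)) - log (x - ξ)) / √(1 - x ^ 2)

section CauchyKernel

variable {x : ℝ}

theorem one_sub_mul_add_sqrt_mul_sqrt_pos (hx : x ∈ Ioo (-1) 1) {ξ : ℝ} (hξ : ξ ∈ Icc (-1) 1) :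
    0 < 1 - x * ξ + √(1 - x ^ 2) * √(1 - ξ ^ 2) := by
  have hxξ : x * ξ < 1 := by
    have := abs_lt.2 hx
    have := abs_le.2 hξ
    calc x * ξ ≤ |x| * |ξ| := by rw [← abs_mul]; exact le_abs_self _
      _ < 1 := by nlinarith [abs_nonneg ξ, abs_nonneg x]
  positivity

theorem cauchyKernelPrimitive_neg_one : cauchyKernelPrimitive x (-1) = 0 := by
  simp [cauchyKernelPrimitive, add_comm]

theorem cauchyKernelPrimitive_one : cauchyKernelPrimitive x 1 = 0 := by
  simp [cauchyKernelPrimitive, ← log_neg_eq_log (x - 1)]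

theorem hasDerivAt_cauchyKernelPrimitive (hx : x ∈ Ioo (-1) 1) {ξ : ℝ} (hξ : ξ ∈ Ioo (-1) 1)
    (hξx : ξ ≠ x) : HasDerivAt (cauchyKernelPrimitive x) (cauchyKernel x ξ) ξ := by
  have hx₀ : 0 < 1 - x ^ 2 := by nlinarith [hx.1, hx.2]
  have hξ₀ : 0 < 1 - ξ ^ 2 := by nlinarith [hξ.1, hξ.2]
  have hA := one_sub_mul_add_sqrt_mul_sqrt_pos hx (Ioo_subset_Icc_self hξ)
  have hxξ : x - ξ ≠ 0 := sub_ne_zero.2 (Ne.symm hξx)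
  have hdw : HasDerivAt (fun t => √(1 - t ^ 2)) (-ξ / √(1 - ξ ^ 2)) ξ := by
    refine (((hasDerivAt_pow 2 ξ).const_sub 1).sqrt hξ₀.ne').congr_deriv ?_
    field_simp
    norm_num
  have hdA : HasDerivAt (fun t => 1 - x * t + √(1 - x ^ 2) * √(1 - t ^ 2))
      (-x + √(1 - x ^ 2) * (-ξ / √(1 - ξ ^ 2))) ξ := by
    refine ((((hasDerivAt_id' ξ).const_mul x).const_sub 1).add
      (hdw.const_mul √(1 - x ^ 2))).congr_deriv ?_
    ring
  refine (((hdA.log hA.ne').sub (((hasDerivAt_id' ξ).const_sub x).log hxξ)).div_const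
    √(1 - x ^ 2)).congr_deriv ?_
  have hs := sq_sqrt hx₀.le
  have hw := sq_sqrt hξ₀.le
  have hs₀ := sqrt_pos.2 hx₀
  have hw₀ := sqrt_pos.2 hξ₀
  unfold cauchyKernel
  field_simp
  linear_combination √(1 - x ^ 2) * hw - √(1 - ξ ^ 2) * hs

theorem intervalIntegrable_cauchyKernel {a b : ℝ} (ha : a ∈ Icc (-1) 1) (hb : b ∈ Icc (-1) 1)
    (hxab : x ∉ uIcc a b) : IntervalIntegrable (cauchyKernel x) volume a b := by
  have hcont : ContinuousOn (fun ξ => 1 / (x - ξ)) (uIcc a b) :=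
    continuousOn_const.div (continuousOn_const.sub continuousOn_id) fun ξ hξ =>
      sub_ne_zero.2 fun h => hxab (h ▸ hξ)
  convert hcont.intervalIntegrable_div_sqrt_one_sub_sq ha hb using 1
  ext ξ
  rw [cauchyKernel, div_div, mul_comm]

theorem integral_cauchyKernel (hx : x ∈ Ioo (-1) 1) {a b : ℝ} (ha : -1 ≤ a) (hb : b ≤ 1)
    (hab : a ≤ b) (hxab : x ∉ Icc a b) :
    ∫ ξ in a..b, cauchyKernel x ξ = cauchyKernelPrimitive x b - cauchyKernelPrimitive x a := by
  have hsub : Icc a b ⊆ Icc (-1) 1 := Icc_subset_Icc ha hb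
  have hne : ∀ ξ ∈ Icc a b, x - ξ ≠ 0 := fun ξ hξ => sub_ne_zero.2 fun h => hxab (h ▸ hξ)
  refine integral_eq_sub_of_hasDerivAt_of_le hab ?_ (fun ξ hξ => ?_) ?_
  · refine ContinuousOn.div_const (ContinuousOn.sub ?_ ?_) _
    · exact ContinuousOn.log (by fun_prop) fun ξ hξ =>
        (one_sub_mul_add_sqrt_mul_sqrt_pos hx (hsub hξ)).ne'
    · exact ContinuousOn.log (by fun_prop) hne
  · exact hasDerivAt_cauchyKernelPrimitive hx ⟨ha.trans_lt hξ.1, hξ.2.trans_le hb⟩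
      fun h => hne ξ (Ioo_subset_Icc_self hξ) (by rw [h, sub_self])
  · rw [← uIcc_of_le hab] at hxab
    exact intervalIntegrable_cauchyKernel ⟨ha, hab.trans hb⟩ ⟨ha.trans hab, hb⟩ hxab

theorem tendsto_pvTruncation_cauchyKernel (hx : x ∈ Ioo (-1) 1) :
    Tendsto (pvTruncation (cauchyKernel x) (-1) 1 x) (𝓝[>] 0) (𝓝 0) := by
  set A : ℝ → ℝ := fun ξ => log (1 - x * ξ + √(1 - x ^ 2) * √(1 - ξ ^ 2))
  have hA : ContinuousAt A x := ContinuousAt.log (by fun_prop)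
    (one_sub_mul_add_sqrt_mul_sqrt_pos hx (Ioo_subset_Icc_self hx)).ne'
  have hlim := ((hA.tendsto.comp (tendsto_sub_nhdsGT_zero x)).sub
    (hA.tendsto.comp (tendsto_add_nhdsGT_zero x))).div_const √(1 - x ^ 2)
  rw [sub_self, zero_div] at hlim
  refine hlim.congr' ?_
  filter_upwards [eventually_pos_sub_add_mem_Ioo hx] with ε ⟨hε, hl, hr⟩
  rw [pvTruncation, integral_cauchyKernel hx le_rfl hl.2.le hl.1.le (by simp [hε]),
    integral_cauchyKernel hx hr.1.le le_rfl hr.2.le (by simp [hε]), cauchyKernelPrimitive_one,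
    cauchyKernelPrimitive_neg_one]
  simp only [cauchyKernelPrimitive, Function.comp, A, sub_sub_cancel, sub_add_cancel_left,
    log_neg_eq_log]
  ring

end CauchyKernel

theorem integral_eval_div_sqrt_mul_sub (p : ℝ[X]) {x a b : ℝ} (ha : a ∈ Icc (-1) 1)
    (hb : b ∈ Icc (-1) 1) (hxab : x ∉ uIcc a b) :
    ∫ ξ in a..b, p.eval ξ / (√(1 - ξ ^ 2) * (x - ξ)) =
      p.eval x * (∫ ξ in a..b, cauchyKernel x ξ) -
        ∫ ξ in a..b, (p.divDiff x).eval ξ / √(1 - ξ ^ 2) := by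
  rw [← intervalIntegral.integral_const_mul, ← integral_sub
    ((intervalIntegrable_cauchyKernel ha hb hxab).const_mul _)
    ((p.divDiff x).continuous.continuousOn.intervalIntegrable_div_sqrt_one_sub_sq ha hb)]
  refine integral_congr fun ξ hξ => ?_
  have hxξ : x - ξ ≠ 0 := sub_ne_zero.2 fun h => hxab (h ▸ hξ)
  have hq : (p.divDiff x).eval ξ = (p.eval x - p.eval ξ) / (x - ξ) := by
    rw [eq_div_iff hxξ]
    linear_combination -sub_mul_eval_divDiff p x ξ
  rw [cauchyKernel, hq]
  field_simp
  ring

theorem tendsto_pvTruncation_eval_div_sqrt_mul_sub (p : ℝ[X]) {x : ℝ} (hx : x ∈ Ioo (-1) 1) :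
    Tendsto (pvTruncation (fun ξ => p.eval ξ / (√(1 - ξ ^ 2) * (x - ξ))) (-1) 1 x) (𝓝[>] 0)
      (𝓝 (-chebyshevIntegral (p.divDiff x))) := by
  have hlim := ((tendsto_pvTruncation_cauchyKernel hx).const_mul (p.eval x)).sub
    (tendsto_pvTruncation_of_intervalIntegrable
      ((p.divDiff x).continuous.continuousOn.intervalIntegrable_div_sqrt_one_sub_sq
        (by norm_num) (by norm_num)) hx)
  rw [mul_zero, zero_sub] at hlim
  refine hlim.congr' ?_
  filter_upwards [eventually_pos_sub_add_mem_Ioo hx] with ε ⟨hε, hl, hr⟩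
  have hx₁ : x ∉ uIcc (-1) (x - ε) := by rw [uIcc_of_le (by linarith [hl.1])]; simp [hε]
  have hx₂ : x ∉ uIcc (x + ε) 1 := by rw [uIcc_of_le (by linarith [hr.2])]; simp [hε]
  simp only [pvTruncation]
  rw [integral_eval_div_sqrt_mul_sub p (by norm_num) (Ioo_subset_Icc_self hl) hx₁,
    integral_eval_div_sqrt_mul_sub p (Ioo_subset_Icc_self hr) (by norm_num) hx₂]
  ring

end

theorem pv_chebyshevT_div_sqrt_general (n : ℕ) (x : ℝ) (hx : x ∈ Set.Ioo (-1:ℝ) 1) :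
    Tendsto
      (fun ε : ℝ =>
        (1 / Real.pi) *
          ((∫ ξ in (-1:ℝ)..(x - ε),
              (Polynomial.Chebyshev.T ℝ n).eval ξ / (Real.sqrt (1 - ξ ^ 2) * (x - ξ))) +
           ∫ ξ in (x + ε)..(1:ℝ),
              (Polynomial.Chebyshev.T ℝ n).eval ξ / (Real.sqrt (1 - ξ ^ 2) * (x - ξ))))
      (nhdsWithin 0 (Set.Ioi 0))
      (nhds (-(Polynomial.Chebyshev.U ℝ ((n : ℤ) - 1)).eval x)) := by
  have h := (tendsto_pvTruncation_eval_div_sqrt_mul_sub (T ℝ n) hx).const_mul (1 / π)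
  rwa [chebyshevIntegral_divDiff_T, ← mul_neg, ← mul_assoc, one_div_mul_cancel pi_ne_zero,
    one_mul] at h

/-- For `n ≥ 1` and `x ∈ (-1,1)`, the principal value
`(1/π) P.V. ∫_{-1}^{1} Tₙ(ξ) / (√(1-ξ²)(x-ξ)) dξ` exists and equals `-Uₙ₋₁(x)`. -/
theorem pv_chebyshevT_div_sqrt (n : ℕ) (hn : 1 ≤ n) (x : ℝ) (hx : x ∈ Set.Ioo (-1:ℝ) 1) :
    Tendsto
      (fun ε : ℝ =>
        (1 / Real.pi) *
          ((∫ ξ in (-1:ℝ)..(x - ε),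
              (Polynomial.Chebyshev.T ℝ n).eval ξ / (Real.sqrt (1 - ξ ^ 2) * (x - ξ))) +
           ∫ ξ in (x + ε)..(1:ℝ),
              (Polynomial.Chebyshev.T ℝ n).eval ξ / (Real.sqrt (1 - ξ ^ 2) * (x - ξ))))
      (nhdsWithin 0 (Set.Ioi 0))
      (nhds (-(Polynomial.Chebyshev.U ℝ ((n : ℤ) - 1)).eval x)) :=
  pv_chebyshevT_div_sqrt_general n x hx
end

section
/- For every x ∈ (-1,1), the principal value P.V. ∫_{-1}^{1} 1 / (√(1-ξ^2) (x-ξ)) dξ exists and equals 0. -/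
/-!
On each side of the singularity the integrand has the explicit primitive
`F(ξ) = (1 - x²)^(-1/2) · log |(1 - x ξ + √(1 - x²) √(1 - ξ²)) / (x - ξ)|`, which is continuous
up to `ξ = ±1` and vanishes there. Since the integrand has constant sign on each side, it is
integrable up to the endpoints, so the truncated integral equals `F(x - ε) - F(x + ε)`. In this
difference the two singular terms `log ε` cancel, and what remains is a difference of values
of the continuous positive numerator at `x ∓ ε`, which tends to `0`.
-/

open Filter Set Topology

namespace intervalIntegral

theorem integral_eq_sub_of_hasDerivAt_of_nonneg {f f' : ℝ → ℝ} {a b : ℝ} (hab : a ≤ b)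
    (hcont : ContinuousOn f (Icc a b)) (hderiv : ∀ x ∈ Ioo a b, HasDerivAt f (f' x) x)
    (hpos : ∀ x ∈ Ioo a b, 0 ≤ f' x) : ∫ x in a..b, f' x = f b - f a :=
  integral_eq_sub_of_hasDerivAt_of_le hab hcont hderiv <|
    (intervalIntegrable_iff_integrableOn_Ioc_of_le hab).2 <|
      integrableOn_deriv_of_nonneg hcont hderiv hpos

theorem integral_eq_sub_of_hasDerivAt_of_nonpos {f f' : ℝ → ℝ} {a b : ℝ} (hab : a ≤ b)
    (hcont : ContinuousOn f (Icc a b)) (hderiv : ∀ x ∈ Ioo a b, HasDerivAt f (f' x) x)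
    (hneg : ∀ x ∈ Ioo a b, f' x ≤ 0) : ∫ x in a..b, f' x = f b - f a := by
  have h := integral_eq_sub_of_hasDerivAt_of_nonneg (f := -f) (f' := -f') hab hcont.neg
    (fun x hx => (hderiv x hx).neg) (fun x hx => neg_nonneg.2 (hneg x hx))
  simp only [Pi.neg_apply, integral_neg] at h
  linarith

end intervalIntegral

namespace ChebyshevHilbert

noncomputable def numer (x ξ : ℝ) : ℝ := 1 - x * ξ + √(1 - x ^ 2) * √(1 - ξ ^ 2)

/-- For `ξ > x` the second logarithm is `log |x - ξ|`, by the convention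
`Real.log (-t) = Real.log t`. -/
noncomputable def primitive (x ξ : ℝ) : ℝ :=
  (√(1 - x ^ 2))⁻¹ * (Real.log (numer x ξ) - Real.log (x - ξ))

variable {x : ℝ}

theorem continuous_numer (x : ℝ) : Continuous (numer x) := by
  unfold numer; fun_prop

theorem numer_pos (hx : x ∈ Ioo (-1) 1) {ξ : ℝ} (hξ : ξ ∈ Icc (-1) 1) : 0 < numer x ξ := by
  have hxξ : x * ξ < 1 := by
    refine (le_abs_self _).trans_lt ?_
    rw [abs_mul]
    exact (mul_le_of_le_one_right (abs_nonneg x) (abs_le.2 hξ)).trans_lt (abs_lt.2 hx)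
  unfold numer
  positivity

theorem primitive_neg_one (x : ℝ) : primitive x (-1) = 0 := by
  simp [primitive, numer, add_comm]

theorem primitive_one (x : ℝ) : primitive x 1 = 0 := by
  rw [primitive, numer, ← Real.log_neg_eq_log (x - 1)]
  norm_num

theorem primitive_sub_sub_primitive_add (x ε : ℝ) :
    primitive x (x - ε) - primitive x (x + ε) =
      (√(1 - x ^ 2))⁻¹ * (Real.log (numer x (x - ε)) - Real.log (numer x (x + ε))) := by
  rw [primitive, primitive, sub_sub_cancel, sub_add_cancel_left, Real.log_neg_eq_log]
  ring

theorem continuousOn_primitive (hx : x ∈ Ioo (-1) 1) :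
    ContinuousOn (primitive x) (Icc (-1) 1 \ {x}) := by
  refine continuousOn_const.mul <| ContinuousOn.sub ?_ ?_
  · exact (continuous_numer x).continuousOn.log fun ξ hξ => (numer_pos hx hξ.1).ne'
  · exact (continuous_sub_left x).continuousOn.log fun ξ hξ => sub_ne_zero.2 (Ne.symm hξ.2)

theorem hasDerivAt_primitive (hx : x ∈ Ioo (-1) 1) {ξ : ℝ} (hξ : ξ ∈ Ioo (-1) 1) (hξx : ξ ≠ x) :
    HasDerivAt (primitive x) (1 / (√(1 - ξ ^ 2) * (x - ξ))) ξ := by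
  have hx2 : 0 < 1 - x ^ 2 := by nlinarith [hx.1, hx.2]
  have hξ2 : 0 < 1 - ξ ^ 2 := by nlinarith [hξ.1, hξ.2]
  have hs : √(1 - x ^ 2) ^ 2 = 1 - x ^ 2 := Real.sq_sqrt hx2.le
  have ht : √(1 - ξ ^ 2) ^ 2 = 1 - ξ ^ 2 := Real.sq_sqrt hξ2.le
  have hs0 : 0 < √(1 - x ^ 2) := Real.sqrt_pos.2 hx2
  have ht0 : 0 < √(1 - ξ ^ 2) := Real.sqrt_pos.2 hξ2
  have hN : numer x ξ ≠ 0 := (numer_pos hx (Ioo_subset_Icc_self hξ)).ne'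
  have hxξ : x - ξ ≠ 0 := sub_ne_zero.2 (Ne.symm hξx)
  have hroot : HasDerivAt (fun u => √(1 - u ^ 2)) (-ξ / √(1 - ξ ^ 2)) ξ :=
    (((hasDerivAt_pow 2 ξ).const_sub 1).sqrt hξ2.ne').congr_deriv (by field_simp; norm_num)
  have hnumer : HasDerivAt (numer x) (-x + √(1 - x ^ 2) * (-ξ / √(1 - ξ ^ 2))) ξ :=
    ((((hasDerivAt_id ξ).const_mul x).const_sub 1).add (hroot.const_mul _)).congr_deriv
      (by simp)
  have hlin : HasDerivAt (fun u => x - u) (-1) ξ := (hasDerivAt_id ξ).const_sub x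
  refine (((hnumer.log hN).sub (hlin.log hxξ)).const_mul (√(1 - x ^ 2))⁻¹).congr_deriv ?_
  unfold numer at hN ⊢
  field_simp
  linear_combination √(1 - x ^ 2) * ht - √(1 - ξ ^ 2) * hs

theorem integral_neg_one_eq_primitive (hx : x ∈ Ioo (-1) 1) {b : ℝ} (hb : -1 ≤ b)
    (hbx : b < x) : ∫ ξ in (-1 : ℝ)..b, 1 / (√(1 - ξ ^ 2) * (x - ξ)) = primitive x b := by
  have hsub : Icc (-1) b ⊆ Icc (-1) 1 \ {x} := fun ξ hξ =>
    ⟨⟨hξ.1, by linarith [hξ.2, hx.2]⟩, (hξ.2.trans_lt hbx).ne⟩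
  rw [intervalIntegral.integral_eq_sub_of_hasDerivAt_of_nonneg hb
      ((continuousOn_primitive hx).mono hsub)
      (fun ξ hξ => hasDerivAt_primitive hx ⟨hξ.1, hξ.2.trans (hbx.trans hx.2)⟩
        (hξ.2.trans hbx).ne)
      (fun ξ hξ => one_div_nonneg.2 <| mul_nonneg (Real.sqrt_nonneg _)
        (sub_nonneg.2 (hξ.2.trans hbx).le)),
    primitive_neg_one, sub_zero]

theorem integral_one_eq_neg_primitive (hx : x ∈ Ioo (-1) 1) {a : ℝ} (ha : a ≤ 1)
    (hxa : x < a) : ∫ ξ in a..(1 : ℝ), 1 / (√(1 - ξ ^ 2) * (x - ξ)) = -primitive x a := by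
  have hsub : Icc a 1 ⊆ Icc (-1) 1 \ {x} := fun ξ hξ =>
    ⟨⟨by linarith [hξ.1, hx.1], hξ.2⟩, (hxa.trans_le hξ.1).ne'⟩
  rw [intervalIntegral.integral_eq_sub_of_hasDerivAt_of_nonpos ha
      ((continuousOn_primitive hx).mono hsub)
      (fun ξ hξ => hasDerivAt_primitive hx ⟨(hx.1.trans hxa).trans hξ.1, hξ.2⟩
        (hxa.trans hξ.1).ne')
      (fun ξ hξ => one_div_nonpos.2 <| mul_nonpos_of_nonneg_of_nonpos (Real.sqrt_nonneg _)
        (sub_nonpos.2 (hxa.trans hξ.1).le)),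
    primitive_one, zero_sub]

theorem tendsto_primitive_sub_primitive (hx : x ∈ Ioo (-1) 1) :
    Tendsto (fun ε => primitive x (x - ε) - primitive x (x + ε)) (𝓝 0) (𝓝 0) := by
  have hN : numer x x ≠ 0 := (numer_pos hx (Ioo_subset_Icc_self hx)).ne'
  simp_rw [primitive_sub_sub_primitive_add]
  have hcont : ContinuousAt
      (fun ε => (√(1 - x ^ 2))⁻¹ * (Real.log (numer x (x - ε)) - Real.log (numer x (x + ε)))) 0 :=
    ((((continuous_numer x).comp (continuous_sub_left x)).continuousAt.log (by simpa)).sub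
      (((continuous_numer x).comp (continuous_const_add x)).continuousAt.log
        (by simpa))).const_mul _
  simpa using hcont.tendsto

end ChebyshevHilbert

/-- For `x ∈ (-1,1)`, the principal value
`P.V. ∫_{-1}^{1} 1 / (√(1-ξ²)(x-ξ)) dξ` exists and equals `0`. -/
theorem pv_one_div_sqrt (x : ℝ) (hx : x ∈ Set.Ioo (-1:ℝ) 1) :
    Tendsto
      (fun ε : ℝ =>
        (∫ ξ in (-1:ℝ)..(x - ε), 1 / (Real.sqrt (1 - ξ ^ 2) * (x - ξ))) +
        ∫ ξ in (x + ε)..(1:ℝ), 1 / (Real.sqrt (1 - ξ ^ 2) * (x - ξ)))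
      (nhdsWithin 0 (Set.Ioi 0)) (nhds 0) := by
  have hδ : 0 < min (1 + x) (1 - x) := lt_min (by linarith [hx.1]) (by linarith [hx.2])
  refine ((ChebyshevHilbert.tendsto_primitive_sub_primitive hx).mono_left
    nhdsWithin_le_nhds).congr' ?_
  filter_upwards [Ioo_mem_nhdsGT hδ] with ε ⟨hε, hεδ⟩
  have hε₁ : ε < 1 + x := hεδ.trans_le (min_le_left _ _)
  have hε₂ : ε < 1 - x := hεδ.trans_le (min_le_right _ _)
  rw [ChebyshevHilbert.integral_neg_one_eq_primitive hx (by linarith) (by linarith),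
    ChebyshevHilbert.integral_one_eq_neg_primitive hx (by linarith) (by linarith), sub_eq_add_neg]
end

section
/- Let (a_n)_{n≥0} be a real sequence with ∑_{n≥1} a_n^2 < ∞, and define φ̄ := a_0 + (1/2) ∑_{n≥1} a_n ∫_{-1}^{1} T_n(x) dx (the series converges absolutely by the Cauchy–Schwarz inequality). Then a_0^2 ≤ ((π^2 − 8)/8) ∑_{n≥1} a_n^2 + 2 φ̄^2. -/
/-!
Put `W = ∑ aₙ₊₁ ∫₋₁¹ Tₙ₊₁`, so that `a₀ = φ̄ - W / 2` and `a₀² ≤ 2 φ̄² + W² / 2`.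
Since `Tₙ(-x) = (-1)ⁿ Tₙ(x)`, the integral of `Tₙ` vanishes for odd `n`, while for even `n` it is
`2 / (1 - n²)`, read off from the antiderivative `Tₙ₊₁ / (2(n+1)) - Tₙ₋₁ / (2(n-1))`. Hence
`∑ₙ (∫ Tₙ₊₁)² = ∑ⱼ (1/(2j+1) - 1/(2j+3))² = π²/8 + (π²/8 - 1) - 1`, the last `1` being a telescoping
sum, and Cauchy–Schwarz gives `W² ≤ (π²/4 - 2) ∑ aₙ₊₁²`.
-/

open Polynomial.Chebyshev Real Filter Topology

theorem tsum_mul_sq_le_tsum_sq_mul_tsum_sq {ι : Type*} {f g : ι → ℝ}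
    (hf : Summable fun i => f i ^ 2) (hg : Summable fun i => g i ^ 2) :
    (∑' i, f i * g i) ^ 2 ≤ (∑' i, f i ^ 2) * ∑' i, g i ^ 2 := by
  have hfg : Summable fun i => f i * g i := by
    refine ((hf.add hg).div_const 2).of_norm_bounded fun i => ?_
    rw [Real.norm_eq_abs, abs_mul, le_div_iff₀ two_pos, ← sq_abs (f i), ← sq_abs (g i)]
    linarith [two_mul_le_add_sq |f i| |g i|]
  refine le_of_tendsto' (hfg.hasSum.pow 2) fun s => ?_
  calc (∑ i ∈ s, f i * g i) ^ 2 ≤ (∑ i ∈ s, f i ^ 2) * ∑ i ∈ s, g i ^ 2 :=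
        Finset.sum_mul_sq_le_sq_mul_sq s f g
    _ ≤ (∑' i, f i ^ 2) * ∑' i, g i ^ 2 :=
        mul_le_mul (hf.sum_le_tsum s fun i _ => sq_nonneg _)
          (hg.sum_le_tsum s fun i _ => sq_nonneg _)
          (Finset.sum_nonneg fun i _ => sq_nonneg _) (tsum_nonneg fun i => sq_nonneg _)

theorem hasSum_sub_succ_of_antitone {f : ℕ → ℝ} (hmono : Antitone f)
    (hf : Tendsto f atTop (𝓝 0)) : HasSum (fun n => f n - f (n + 1)) (f 0) := by
  rw [hasSum_iff_tendsto_nat_of_nonneg fun n => sub_nonneg.2 (hmono n.le_succ)]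
  simp_rw [Finset.sum_range_sub']
  simpa using (tendsto_const_nhds (x := f 0)).sub hf

theorem hasSum_one_div_odd_sq : HasSum (fun j : ℕ => 1 / (2 * j + 1 : ℝ) ^ 2) (π ^ 2 / 8) := by
  set ζ₂ : ℕ → ℝ := fun n => 1 / (n : ℝ) ^ 2
  have heven : HasSum (fun j => ζ₂ (2 * j)) (π ^ 2 / 24) := by
    rw [show π ^ 2 / 24 = 1 / 4 * (π ^ 2 / 6) by ring]
    refine (hasSum_zeta_two.mul_left (1 / 4)).congr_fun fun j => ?_
    simp only [ζ₂]
    push_cast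
    ring
  obtain ⟨S, hodd⟩ : Summable fun j => ζ₂ (2 * j + 1) := by
    refine ((summable_nat_add_iff 1).2 hasSum_zeta_two.summable).of_nonneg_of_le
      (fun j => by positivity) fun j => ?_
    simp only [ζ₂]
    gcongr
    linarith
  have hS : π ^ 2 / 24 + S = π ^ 2 / 6 := (heven.even_add_odd hodd).unique hasSum_zeta_two
  convert hodd using 1
  · ext j
    simp [ζ₂]
  · linarith

theorem hasSum_sq_one_div_odd_sub_one_div_odd_succ :
    HasSum (fun j : ℕ => (1 / (2 * j + 1 : ℝ) - 1 / (2 * j + 3)) ^ 2) (π ^ 2 / 4 - 2) := by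
  set f : ℕ → ℝ := fun j => 1 / (2 * j + 1)
  have hf_succ (j : ℕ) : f (j + 1) = 1 / (2 * j + 3) := by
    simp only [f]
    push_cast
    ring
  have hsq : HasSum (fun j => f j ^ 2) (π ^ 2 / 8) := by
    simpa only [f, div_pow, one_pow] using hasSum_one_div_odd_sq
  have hsq_succ : HasSum (fun j => f (j + 1) ^ 2) (π ^ 2 / 8 - 1) := by
    simpa [f] using (hasSum_nat_add_iff' 1).2 hsq
  have htel : HasSum (fun j => f j - f (j + 1)) 1 := by
    have hmono : Antitone f := fun i j hij => by simp only [f]; gcongr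
    have hlim : Tendsto f atTop (𝓝 0) :=
      (tendsto_one_div_add_atTop_nhds_zero_nat.comp
        (tendsto_id.const_mul_atTop' two_pos)).congr fun j => by simp [f]
    simpa [f] using hasSum_sub_succ_of_antitone hmono hlim
  rw [show π ^ 2 / 4 - 2 = π ^ 2 / 8 + (π ^ 2 / 8 - 1) - 1 by ring]
  -- `2 f j f (j + 1) = f j - f (j + 1)`
  refine ((hsq.add hsq_succ).sub htel).congr_fun fun j => ?_
  rw [← hf_succ]
  simp only [f]
  push_cast
  field_simp
  ring

namespace Polynomial.Chebyshev

-- `T_m' = m U_{m-1}` and `2 Tₙ = Uₙ - Uₙ₋₂`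
theorem hasDerivAt_antiderivative_T (n : ℤ) (h₁ : (n : ℝ) + 1 ≠ 0) (h₂ : (n : ℝ) - 1 ≠ 0)
    (x : ℝ) :
    HasDerivAt
      (fun y => (T ℝ (n + 1)).eval y / (2 * (n + 1)) - (T ℝ (n - 1)).eval y / (2 * (n - 1)))
      ((T ℝ n).eval x) x := by
  refine ((((T ℝ (n + 1)).hasDerivAt x).div_const (2 * (n + 1))).sub
    (((T ℝ (n - 1)).hasDerivAt x).div_const (2 * (n - 1)))).congr_deriv ?_
  have h := congrArg (eval x) (two_mul_T_eq_U_sub_U ℝ (n - 2))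
  rw [T_derivative_eq_U, T_derivative_eq_U, show n - 1 - 1 = n - 2 by ring]
  simp only [eval_mul, eval_sub, eval_ofNat, eval_intCast, sub_add_cancel,
    add_sub_cancel_right] at h ⊢
  push_cast
  field_simp
  linarith

theorem integral_T_of_odd {n : ℤ} (hn : Odd n) : ∫ x in (-1 : ℝ)..1, (T ℝ n).eval x = 0 := by
  have h := intervalIntegral.integral_comp_neg (a := -1) (b := 1) fun x => (T ℝ n).eval x
  simp only [T_eval_neg, Int.negOnePow_odd _ hn, Units.val_neg, Units.val_one, Int.cast_neg,
    Int.cast_one, neg_one_mul, intervalIntegral.integral_neg, neg_neg] at h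
  linarith

theorem integral_T_of_even {n : ℤ} (hn : Even n) :
    ∫ x in (-1 : ℝ)..1, (T ℝ n).eval x = 2 / (1 - n ^ 2) := by
  have h₁ : (n : ℝ) + 1 ≠ 0 := by
    exact_mod_cast show n + 1 ≠ 0 from fun h => by simpa [h] using hn.add_one
  have h₂ : (n : ℝ) - 1 ≠ 0 := by
    exact_mod_cast show n - 1 ≠ 0 from fun h => by simpa [h] using hn.sub_odd odd_one
  rw [intervalIntegral.integral_eq_sub_of_hasDerivAt
    (fun x _ => hasDerivAt_antiderivative_T n h₁ h₂ x)
    ((T ℝ n).continuous_aeval.intervalIntegrable _ _)]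
  simp only [T_eval_one, T_eval_neg_one, Int.negOnePow_odd _ hn.add_one,
    Int.negOnePow_odd _ (hn.sub_odd odd_one), Units.val_neg, Units.val_one, Int.cast_neg,
    Int.cast_one]
  rw [show (1 : ℝ) - n ^ 2 = -((n + 1) * (n - 1)) by ring]
  field_simp
  ring

theorem hasSum_sq_integral_T_succ :
    HasSum (fun n : ℕ => (∫ x in (-1 : ℝ)..1, (T ℝ (n + 1)).eval x) ^ 2) (π ^ 2 / 4 - 2) := by
  rw [← zero_add (π ^ 2 / 4 - 2)]
  refine HasSum.even_add_odd ?_ ?_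
  · refine hasSum_zero.congr_fun fun j => ?_
    rw [integral_T_of_odd ⟨j, by push_cast; ring⟩]
    simp
  · refine hasSum_sq_one_div_odd_sub_one_div_odd_succ.congr_fun fun j => ?_
    rw [integral_T_of_even ⟨j + 1, by push_cast; ring⟩]
    push_cast
    rw [show (1 : ℝ) - (2 * j + 1 + 1) ^ 2 = -((2 * j + 1) * (2 * j + 3)) by ring]
    field_simp
    ring

end Polynomial.Chebyshev

/-- If `∑_{n≥1} aₙ² < ∞` and `φ̄ = a₀ + (1/2) ∑_{n≥1} aₙ ∫_{-1}^{1} Tₙ(x) dx`, then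
`a₀² ≤ ((π² − 8)/8) ∑_{n≥1} aₙ² + 2 φ̄²`. -/
theorem coeff_zero_sq_le (a : ℕ → ℝ)
    (ha : Summable fun n : ℕ => (a (n + 1)) ^ 2)
    (φbar : ℝ)
    (hφbar : φbar = a 0 + (1 / 2) *
      ∑' n : ℕ, a (n + 1) * ∫ x in (-1:ℝ)..1, (Polynomial.Chebyshev.T ℝ (n + 1)).eval x) :
    (a 0) ^ 2 ≤ (Real.pi ^ 2 - 8) / 8 * (∑' n : ℕ, (a (n + 1)) ^ 2) + 2 * φbar ^ 2 := by
  set W := ∑' n : ℕ, a (n + 1) * ∫ x in (-1:ℝ)..1, (T ℝ (n + 1)).eval x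
  have hW : W ^ 2 ≤ (∑' n : ℕ, a (n + 1) ^ 2) * (π ^ 2 / 4 - 2) := by
    rw [← hasSum_sq_integral_T_succ.tsum_eq]
    exact tsum_mul_sq_le_tsum_sq_mul_tsum_sq ha hasSum_sq_integral_T_succ.summable
  calc a 0 ^ 2 = (φbar - W / 2) ^ 2 := by rw [hφbar]; ring
    _ ≤ 2 * φbar ^ 2 + W ^ 2 / 2 := by nlinarith [sq_nonneg (φbar + W / 2)]
    _ ≤ 2 * φbar ^ 2 + (∑' n : ℕ, a (n + 1) ^ 2) * (π ^ 2 / 4 - 2) / 2 := by gcongr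
    _ = (π ^ 2 - 8) / 8 * (∑' n : ℕ, a (n + 1) ^ 2) + 2 * φbar ^ 2 := by ring
end

section
/- (Poincaré-type inequality for the nonlocal operator 𝒜, in Chebyshev-coefficient form.) Let (a_n)_{n≥0} be a real sequence with ∑_{n≥1} n a_n^2 < ∞, and define φ̄ := a_0 + (1/2) ∑_{n≥1} a_n ∫_{-1}^{1} T_n(x) dx. Then π a_0^2 + (π/2) ∑_{n≥1} a_n^2 ≤ ((π^2 − 4)/4) · (π/2) ∑_{n≥1} n a_n^2 + 2π φ̄^2. -/
/-!
Put `Q = ∑ (n+1) aₙ₊₁²`, `S = ∑ aₙ₊₁²` and `P = ∑ aₙ₊₁ ∫ Tₙ₊₁`, so that `φ̄ = a₀ + P/2`. The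
right-hand side minus the left-hand side is `π (a₀ + P)² + (π/2) (K Q - S - P²)` with
`K = (π² - 4)/4`, and `S ≤ Q`, so it suffices that `P² ≤ (4/9) Q`, because `1 + 4/9 ≤ K` as
`π > 3.14`. By Cauchy–Schwarz, `P² ≤ Q ∑ (∫ Tₙ₊₁)² / (n+1)`. From the antiderivative
`(Tₘ₊₁/(m+1) - Tₘ₋₁/(m-1))/2` of `Tₘ` one gets `∫_{-1}^{1} Tₘ = (1 + (-1)ᵐ)/(1 - m²)`, so the
`m`-th weight is at most `(2/((m-1)(m+1)))² / m ≤ (4/9) (1/(m-1) - 1/m)`, and the weights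
telescope to at most `4/9`.
-/

open Polynomial Polynomial.Chebyshev

theorem summable_and_tsum_le_of_le_sub_succ {d g : ℕ → ℝ} (hd : ∀ n, 0 ≤ d n) (hg : ∀ n, 0 ≤ g n)
    (h : ∀ n, d n ≤ g n - g (n + 1)) : Summable d ∧ ∑' n, d n ≤ g 0 := by
  have hpartial (N : ℕ) : ∑ i ∈ Finset.range N, d i ≤ g 0 :=
    calc ∑ i ∈ Finset.range N, d i ≤ ∑ i ∈ Finset.range N, (g i - g (i + 1)) :=
          Finset.sum_le_sum fun i _ => h i
      _ = g 0 - g N := Finset.sum_range_sub' g N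
      _ ≤ g 0 := sub_le_self _ (hg N)
  exact ⟨summable_of_sum_range_le hd hpartial, Real.tsum_le_of_sum_range_le hd hpartial⟩

theorem sq_tsum_le_tsum_mul_tsum_of_sq_le_mul {ι : Type*} {r f g : ι → ℝ} (hf : ∀ i, 0 ≤ f i)
    (hg : ∀ i, 0 ≤ g i) (hrfg : ∀ i, r i ^ 2 ≤ f i * g i) (hfs : Summable f) (hgs : Summable g) :
    (∑' i, r i) ^ 2 ≤ (∑' i, f i) * ∑' i, g i := by
  have hrs : Summable r := by
    refine Summable.of_norm_bounded ((hfs.add hgs).div_const 2) fun i => ?_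
    have h2 := two_mul_le_add_of_sq_le_mul (hf i) (hg i) ((sq_abs (r i)).trans_le (hrfg i))
    rw [Real.norm_eq_abs]
    linarith
  refine le_of_tendsto' (hrs.hasSum.pow 2) fun s => ?_
  calc (∑ i ∈ s, r i) ^ 2 ≤ (∑ i ∈ s, f i) * ∑ i ∈ s, g i :=
        Finset.sum_sq_le_sum_mul_sum_of_sq_le_mul s (fun i _ => hf i) (fun i _ => hg i)
          fun i _ => hrfg i
    _ ≤ (∑' i, f i) * ∑' i, g i :=
        mul_le_mul (hfs.sum_le_tsum s fun i _ => hf i) (hgs.sum_le_tsum s fun i _ => hg i)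
          (Finset.sum_nonneg fun i _ => hg i) (tsum_nonneg hf)

namespace Polynomial.Chebyshev

theorem derivative_mul_T_add_one_sub_mul_T_sub_one {R : Type*} [CommRing R]
    (n : ℤ) :
    derivative (((n : R[X]) - 1) * T R (n + 1) - ((n : R[X]) + 1) * T R (n - 1)) =
      2 * ((n : R[X]) ^ 2 - 1) * T R n := by
  have h := two_mul_T_eq_U_sub_U R (n - 2)
  rw [sub_add_cancel] at h
  simp only [derivative_sub, derivative_mul, derivative_add, derivative_intCast,
    derivative_one, T_derivative_eq_U, add_sub_cancel_right, show n - 1 - 1 = n - 2 by ring]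
  push_cast
  linear_combination (-((n : R[X]) ^ 2 - 1)) * h

theorem integral_eval_T (n : ℤ) (hn : (n : ℝ) ^ 2 ≠ 1) :
    ∫ x in (-1 : ℝ)..1, (T ℝ n).eval x = (1 + n.negOnePow) / (1 - n ^ 2) := by
  set P : ℝ[X] := (n - 1 : ℝ[X]) * T ℝ (n + 1) - (n + 1 : ℝ[X]) * T ℝ (n - 1)
  have hFTC : ∫ x in (-1 : ℝ)..1, (derivative P).eval x = P.eval 1 - P.eval (-1) :=
    intervalIntegral.integral_eq_sub_of_hasDerivAt (fun x _ => P.hasDerivAt x)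
      ((Polynomial.continuous _).intervalIntegrable _ _)
  have hP1 : P.eval 1 = -2 := by simp [P, T_eval_one]; ring
  have hPm1 : P.eval (-1) = 2 * n.negOnePow := by
    simp only [P, eval_sub, eval_mul, eval_add, eval_one, eval_intCast, T_eval_neg_one,
      Int.negOnePow_succ, Int.negOnePow_sub, Int.negOnePow_one]
    push_cast
    ring
  rw [derivative_mul_T_add_one_sub_mul_T_sub_one, hP1, hPm1] at hFTC
  simp only [eval_mul, eval_ofNat, eval_sub, eval_pow, eval_intCast, eval_one,
    intervalIntegral.integral_const_mul] at hFTC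
  rw [eq_div_iff (sub_ne_zero.mpr (Ne.symm hn))]
  linear_combination (-1 / 2 : ℝ) * hFTC

theorem abs_integral_eval_T_le (n : ℤ) (hn : 1 < (n : ℝ) ^ 2) :
    |∫ x in (-1 : ℝ)..1, (T ℝ n).eval x| ≤ 2 / (n ^ 2 - 1) := by
  have hsign : |(1 : ℝ) + n.negOnePow| ≤ 2 := by
    rcases Int.isUnit_iff.mp n.negOnePow.isUnit with h | h <;> norm_num [h]
  rw [integral_eval_T n hn.ne', abs_div, abs_sub_comm, abs_of_pos (sub_pos.mpr hn)]
  gcongr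

end Polynomial.Chebyshev

theorem summable_and_tsum_sq_integral_eval_T_succ_div_le :
    Summable (fun n : ℕ => (∫ x in (-1 : ℝ)..1, (T ℝ (n + 1)).eval x) ^ 2 / (n + 1)) ∧
      ∑' n : ℕ, (∫ x in (-1 : ℝ)..1, (T ℝ (n + 1)).eval x) ^ 2 / (n + 1) ≤ 4 / 9 := by
  set w : ℕ → ℝ := fun n => (∫ x in (-1 : ℝ)..1, (T ℝ (n + 1)).eval x) ^ 2 / (n + 1)
  set g : ℕ → ℝ := fun n => 4 / (9 * (n + 1))
  have hw0 : w 0 = 0 := by simp [w, integral_id]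
  have hstep (n : ℕ) : w (n + 1) ≤ g n - g (n + 1) := by
    have hx : (1 : ℝ) ≤ n + 1 := by simp
    have hbound := abs_integral_eval_T_le ((n + 1 : ℕ) + 1) (by push_cast; nlinarith)
    simp only [w, g]
    push_cast at hbound ⊢
    set c := ∫ x in (-1 : ℝ)..1, (T ℝ ((n : ℤ) + 1 + 1)).eval x
    set x : ℝ := n + 1
    have hc : c ^ 2 ≤ (2 / (x * (x + 2))) ^ 2 := by
      rw [← sq_abs]
      gcongr
      exact hbound.trans_eq (by ring)
    calc c ^ 2 / (x + 1) ≤ (2 / (x * (x + 2))) ^ 2 / (x + 1) := by gcongr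
      _ ≤ 4 / (9 * x) - 4 / (9 * (x + 1)) := by
        rw [div_pow, div_div, div_sub_div _ _ (by positivity) (by positivity),
          div_le_div_iff₀ (by positivity) (by positivity)]
        have h9 : 9 ≤ x * (x + 2) ^ 2 := by nlinarith
        nlinarith [mul_le_mul_of_nonneg_right h9 (by positivity : (0 : ℝ) ≤ x * (x + 1))]
  obtain ⟨hsum, hle⟩ := summable_and_tsum_le_of_le_sub_succ (fun n => by positivity)
    (fun n => by positivity) hstep
  refine ⟨(summable_nat_add_iff 1).mp hsum, ?_⟩
  rw [tsum_eq_zero_add' hsum, hw0, zero_add]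
  simpa [g] using hle

/-- Poincaré-type inequality for the nonlocal operator `𝒜` in Chebyshev-coefficient
form: if `∑_{n≥1} n aₙ² < ∞` and `φ̄ = a₀ + (1/2) ∑_{n≥1} aₙ ∫_{-1}^{1} Tₙ(x) dx`, then
`π a₀² + (π/2) ∑_{n≥1} aₙ² ≤ ((π² − 4)/4) (π/2) ∑_{n≥1} n aₙ² + 2π φ̄²`. -/
theorem poincare_type_inequality (a : ℕ → ℝ)
    (ha : Summable fun n : ℕ => ((n : ℝ) + 1) * (a (n + 1)) ^ 2)
    (φbar : ℝ)
    (hφbar : φbar = a 0 + (1 / 2) *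
      ∑' n : ℕ, a (n + 1) * ∫ x in (-1:ℝ)..1, (Polynomial.Chebyshev.T ℝ (n + 1)).eval x) :
    Real.pi * (a 0) ^ 2 + Real.pi / 2 * (∑' n : ℕ, (a (n + 1)) ^ 2)
      ≤ (Real.pi ^ 2 - 4) / 4 * (Real.pi / 2 * ∑' n : ℕ, ((n : ℝ) + 1) * (a (n + 1)) ^ 2)
        + 2 * Real.pi * φbar ^ 2 := by
  set Q := ∑' n : ℕ, ((n : ℝ) + 1) * a (n + 1) ^ 2
  set S := ∑' n : ℕ, a (n + 1) ^ 2
  set P := ∑' n : ℕ, a (n + 1) * ∫ x in (-1:ℝ)..1, (T ℝ (n + 1)).eval x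
  obtain ⟨hws, hw⟩ := summable_and_tsum_sq_integral_eval_T_succ_div_le
  have hQ : 0 ≤ Q := tsum_nonneg fun n => by positivity
  have hPQ : P ^ 2 ≤ 4 / 9 * Q := by
    refine (sq_tsum_le_tsum_mul_tsum_of_sq_le_mul (fun n => by positivity)
      (fun n => by positivity) (fun n => le_of_eq ?_) ha hws).trans ?_
    · field_simp
    · exact (mul_le_mul_of_nonneg_left hw hQ).trans_eq (mul_comm _ _)
  have hSQ : S ≤ Q := by
    have hle (n : ℕ) : a (n + 1) ^ 2 ≤ ((n : ℝ) + 1) * a (n + 1) ^ 2 :=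
      le_mul_of_one_le_left (sq_nonneg _) (by simp)
    exact (ha.of_nonneg_of_le (fun n => sq_nonneg _) hle).tsum_le_tsum hle ha
  have hπ : 13 / 9 ≤ (Real.pi ^ 2 - 4) / 4 := by nlinarith [Real.pi_gt_d2]
  have hkey : S + P ^ 2 ≤ (Real.pi ^ 2 - 4) / 4 * Q :=
    calc S + P ^ 2 ≤ 13 / 9 * Q := by linarith
      _ ≤ (Real.pi ^ 2 - 4) / 4 * Q := mul_le_mul_of_nonneg_right hπ hQ
  rw [hφbar]
  linear_combination Real.pi / 2 * hkey + Real.pi * sq_nonneg (a 0 + P)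
end

section
/- (Coercivity of the bilinear form a(φ,φ) = ‖φ‖²_{L²} + (𝒜φ,φ).) Let (a_n)_{n≥0} be a real sequence with ∑_{n≥0} |a_n| < ∞ and ∑_{n≥1} n a_n^2 < ∞, and define φ(x) := ∑_{n≥0} a_n T_n(x) for x ∈ [-1,1]. Then ∫_{-1}^{1} φ(x)^2 dx + (π/2) ∑_{n≥1} n a_n^2 ≥ (1/π) ( ∫_{-1}^{1} φ(x)^2 (1-x^2)^{-1/2} dx + (π/2) ∑_{n≥1} n a_n^2 ). -/
/-!
Substituting `x = cos θ` turns `φ` into the cosine series `G θ = ∑ aₙ cos (n θ)`, the weighted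
norm into `∫₀^π G² = π a₀² + (π/2) ∑_{n≥1} aₙ² ≤ π a₀² + (π/2) ∑ n aₙ²`, and `∫ φ²` into
`∫₀^π G² sin θ`. So only the mean `a₀ = (1/π) ∫₀^π G` has to be controlled by the two integrals,
which a weighted Cauchy–Schwarz inequality does: with `u = (π - 2) + π sin θ` and
`v = 2(π - 1) - π sin θ` one has `u v ≥ 2(π - 1)(π - 2)` and `∫₀^π v = 2π(π - 2)`, giving
`(π - 1) π a₀² ≤ (π - 2) ∫₀^π G² + π ∫₀^π G² sin θ`, which is exactly what the inequality needs.
-/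

open Real MeasureTheory Set Polynomial.Chebyshev

theorem intervalIntegral.hasSum_integral_of_norm_le {ι E : Type*} [Countable ι]
    [NormedAddCommGroup E] [NormedSpace ℝ E] [CompleteSpace E]
    {μ : Measure ℝ} [IsLocallyFiniteMeasure μ]
    {f : ι → ℝ → E} {u : ι → ℝ} {a b : ℝ} (hf : ∀ i, Continuous (f i)) (hu : Summable u)
    (hfu : ∀ i, ∀ x ∈ uIcc a b, ‖f i x‖ ≤ u i) :
    HasSum (fun i => ∫ x in a..b, f i x ∂μ) (∫ x in a..b, ∑' i, f i x ∂μ) :=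
  intervalIntegral.hasSum_integral_of_dominated_convergence (fun i _ => u i)
    (fun i => (hf i).aestronglyMeasurable)
    (fun i => ae_of_all _ fun x hx => hfu i x (uIoc_subset_uIcc hx))
    (ae_of_all _ fun _ _ => hu) intervalIntegrable_const
    (ae_of_all _ fun x hx => (hu.of_norm_bounded fun i => hfu i x (uIoc_subset_uIcc hx)).hasSum)

theorem intervalIntegral.integral_comp_cos_smul_sin {E : Type*} [NormedAddCommGroup E]
    [NormedSpace ℝ E] (g : ℝ → E) :
    ∫ x in (-1)..1, g x = ∫ θ in 0..π, sin θ • g (cos θ) := by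
  rw [intervalIntegral.integral_of_le (by norm_num), intervalIntegral.integral_of_le pi_pos.le,
    ← integral_Icc_eq_integral_Ioc, ← integral_Icc_eq_integral_Ioc, ← bijOn_cos.image_eq,
    integral_image_eq_integral_abs_deriv_smul measurableSet_Icc
      (fun θ _ => (hasDerivAt_cos θ).hasDerivWithinAt) injOn_cos g]
  refine setIntegral_congr_fun measurableSet_Icc fun θ hθ => ?_
  rw [abs_neg, abs_of_nonneg (sin_nonneg_of_nonneg_of_le_pi hθ.1 hθ.2)]

theorem sq_integral_le_integral_mul_integral {f u v : ℝ → ℝ} {a b k : ℝ} (hab : a ≤ b)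
    (hk : 0 < k) (hf : IntervalIntegrable f volume a b) (hv : IntervalIntegrable v volume a b)
    (hfu : IntervalIntegrable (fun x => f x ^ 2 * u x) volume a b)
    (hv0 : ∀ x ∈ Icc a b, 0 < v x) (huv : ∀ x ∈ Icc a b, k ≤ u x * v x) :
    k * (∫ x in a..b, f x) ^ 2 ≤ (∫ x in a..b, v x) * ∫ x in a..b, f x ^ 2 * u x := by
  have hquad : ∀ t : ℝ, 0 ≤ (k * ∫ x in a..b, v x) * (t * t)
      + (-2 * k * ∫ x in a..b, f x) * t + ∫ x in a..b, f x ^ 2 * u x := by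
    intro t
    have hpt : ∀ x ∈ Icc a b, 0 ≤ (k * (t * t)) * v x + (-2 * k * t) * f x + f x ^ 2 * u x := by
      intro x hx
      -- `v x` times the integrand is `k (t v x - f x)² + f x² (u x v x - k)`
      refine nonneg_of_mul_nonneg_right ?_ (hv0 x hx)
      nlinarith [mul_nonneg hk.le (sq_nonneg (t * v x - f x)),
        mul_nonneg (sq_nonneg (f x)) (sub_nonneg.2 (huv x hx))]
    have := intervalIntegral.integral_nonneg (μ := volume) hab hpt
    rw [intervalIntegral.integral_add ((hv.const_mul _).add (hf.const_mul _)) hfu,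
      intervalIntegral.integral_add (hv.const_mul _) (hf.const_mul _),
      intervalIntegral.integral_const_mul, intervalIntegral.integral_const_mul] at this
    linarith
  have := discrim_le_zero hquad
  rw [discrim] at this
  nlinarith

theorem integral_cos_nat_mul_mul_cos_nat_mul (m n : ℕ) :
    ∫ θ in 0..π, cos (m * θ) * cos (n * θ) = if m = n then (if m = 0 then π else π / 2) else 0 := by
  have hT : ∫ θ in 0..π, cos (m * θ) * cos (n * θ)
      = ∫ x, (T ℝ m).eval x * (T ℝ n).eval x ∂measureT := by
    simp [integral_measureT_eq_integral_cos, T_real_cos]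
  rw [hT]
  split_ifs with hmn hm
  · subst hmn hm; exact integral_eval_T_real_mul_self_measureT_zero
  · subst hmn; exact integral_T_real_mul_self_measureT_of_ne_zero hm
  · exact integral_eval_T_real_mul_eval_T_real_measureT_of_ne hmn

noncomputable def cosSeries (a : ℕ → ℝ) (θ : ℝ) : ℝ := ∑' n, a n * cos (n * θ)

namespace cosSeries

variable {a : ℕ → ℝ}

theorem norm_mul_cos_le (n : ℕ) (θ : ℝ) : ‖a n * cos (n * θ)‖ ≤ |a n| := by
  rw [norm_mul, norm_eq_abs, norm_eq_abs]
  exact mul_le_of_le_one_right (abs_nonneg _) (abs_cos_le_one _)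

theorem continuous (ha : Summable fun n => |a n|) : Continuous (cosSeries a) :=
  continuous_tsum (fun n => by fun_prop) ha norm_mul_cos_le

theorem hasSum_integral_mul (ha : Summable fun n => |a n|) {h : ℝ → ℝ} (hh : Continuous h) :
    HasSum (fun n => a n * ∫ θ in 0..π, cos (n * θ) * h θ) (∫ θ in 0..π, cosSeries a θ * h θ) := by
  obtain ⟨C, hC⟩ := (isCompact_uIcc (a := 0) (b := π)).exists_bound_of_continuousOn hh.continuousOn
  have hsum := intervalIntegral.hasSum_integral_of_norm_le (μ := volume)
    (f := fun n θ => a n * cos (n * θ) * h θ) (fun n => by fun_prop) (ha.mul_right C)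
    fun n θ hθ => by
      rw [norm_mul]
      exact mul_le_mul (norm_mul_cos_le n θ) (hC θ hθ) (norm_nonneg _) (abs_nonneg _)
  simp_rw [mul_assoc, intervalIntegral.integral_const_mul, ← mul_assoc] at hsum
  simpa only [cosSeries, tsum_mul_right] using hsum

theorem integral_mul_cos (ha : Summable fun n => |a n|) (m : ℕ) :
    ∫ θ in 0..π, cosSeries a θ * cos (m * θ) = a m * (if m = 0 then π else π / 2) := by
  rw [← (hasSum_integral_mul ha (h := fun θ => cos (m * θ)) (by fun_prop)).tsum_eq,
    tsum_eq_single m fun n hn => by simp [integral_cos_nat_mul_mul_cos_nat_mul, hn]]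
  simp [integral_cos_nat_mul_mul_cos_nat_mul]

theorem hasSum_integral_sq (ha : Summable fun n => |a n|) :
    HasSum (fun n => a n ^ 2 * (if n = 0 then π else π / 2)) (∫ θ in 0..π, cosSeries a θ ^ 2) := by
  have h := hasSum_integral_mul ha (continuous ha)
  simp_rw [mul_comm (cos _), integral_mul_cos ha, ← mul_assoc, ← sq] at h
  exact h

theorem integral_sq_le (ha : Summable fun n => |a n|)
    (ha' : Summable fun n : ℕ => (n : ℝ) * a n ^ 2) :
    ∫ θ in 0..π, cosSeries a θ ^ 2 ≤ π * a 0 ^ 2 + π / 2 * ∑' n : ℕ, (n : ℝ) * a n ^ 2 := by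
  refine hasSum_le (fun n => ?_) (hasSum_integral_sq ha)
    ((hasSum_ite_eq 0 (π * a 0 ^ 2)).add (ha'.hasSum.mul_left (π / 2)))
  rcases eq_or_ne n 0 with rfl | hn
  · simp [mul_comm]
  · have : (1 : ℝ) ≤ n := Nat.one_le_cast.2 (Nat.one_le_iff_ne_zero.2 hn)
    simp only [hn, if_false, zero_add]
    nlinarith [mul_le_mul_of_nonneg_right this (by positivity : 0 ≤ π / 2 * a n ^ 2)]

end cosSeries

theorem sq_integral_zero_pi_le {G : ℝ → ℝ} (hG : Continuous G) :
    (π - 1) * (∫ θ in 0..π, G θ) ^ 2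
      ≤ π * ((π - 2) * (∫ θ in 0..π, G θ ^ 2) + π * ∫ θ in 0..π, G θ ^ 2 * sin θ) := by
  have hπ := pi_gt_three
  have hCS := sq_integral_le_integral_mul_integral (f := G) (k := 2 * (π - 1) * (π - 2))
    (u := fun θ => (π - 2) + π * sin θ) (v := fun θ => 2 * (π - 1) - π * sin θ)
    pi_pos.le (by nlinarith) (hG.intervalIntegrable _ _)
    (Continuous.intervalIntegrable (by fun_prop) _ _)
    (Continuous.intervalIntegrable (by fun_prop) _ _)
    (fun θ _ => by nlinarith [sin_le_one θ])
    (fun θ hθ => by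
      -- `u v = 2 (π - 1) (π - 2) + π² sin θ (1 - sin θ)`
      have := sin_nonneg_of_nonneg_of_le_pi hθ.1 hθ.2
      nlinarith [mul_nonneg (sq_nonneg π) (mul_nonneg this (sub_nonneg.2 (sin_le_one θ)))])
  have hv : ∫ θ in 0..π, (2 * (π - 1) - π * sin θ) = 2 * π * (π - 2) := by
    rw [intervalIntegral.integral_sub intervalIntegrable_const
      (Continuous.intervalIntegrable (by fun_prop) _ _), intervalIntegral.integral_const,
      intervalIntegral.integral_const_mul, integral_sin, cos_zero, cos_pi, smul_eq_mul]
    ring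
  have hu : ∫ θ in 0..π, G θ ^ 2 * ((π - 2) + π * sin θ)
      = (π - 2) * (∫ θ in 0..π, G θ ^ 2) + π * ∫ θ in 0..π, G θ ^ 2 * sin θ := by
    rw [intervalIntegral.integral_congr
        (g := fun θ => (π - 2) * G θ ^ 2 + π * (G θ ^ 2 * sin θ)) fun θ _ => by ring,
      intervalIntegral.integral_add (Continuous.intervalIntegrable (by fun_prop) _ _)
        (Continuous.intervalIntegrable (by fun_prop) _ _),
      intervalIntegral.integral_const_mul, intervalIntegral.integral_const_mul]
  rw [hv, hu] at hCS
  nlinarith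

/-- Coercivity of the bilinear form `a(φ,φ) = ‖φ‖²_{L²} + (𝒜φ,φ)`: for
`φ = ∑ aₙ Tₙ` with `∑ |aₙ| < ∞` and `∑ n aₙ² < ∞`,
`∫ φ² dx + (π/2) ∑_{n≥1} n aₙ² ≥ (1/π)(∫ φ²/√(1-x²) dx + (π/2) ∑_{n≥1} n aₙ²)`. -/
theorem coercivity (a : ℕ → ℝ)
    (ha : Summable fun n : ℕ => |a n|)
    (ha' : Summable fun n : ℕ => (n : ℝ) * (a n) ^ 2)
    (φ : ℝ → ℝ)
    (hφ : ∀ x : ℝ, φ x = ∑' n : ℕ, a n * (Polynomial.Chebyshev.T ℝ n).eval x) :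
    (∫ x in (-1:ℝ)..1, (φ x) ^ 2) + Real.pi / 2 * (∑' n : ℕ, (n : ℝ) * (a n) ^ 2)
      ≥ (1 / Real.pi) *
          ((∫ x in (-1:ℝ)..1, (φ x) ^ 2 / Real.sqrt (1 - x ^ 2))
            + Real.pi / 2 * ∑' n : ℕ, (n : ℝ) * (a n) ^ 2) := by
  have hφ_cos (θ : ℝ) : φ (cos θ) = cosSeries a θ := by simp [hφ, cosSeries, T_real_cos]
  have hL2 : ∫ x in (-1:ℝ)..1, φ x ^ 2 = ∫ θ in 0..π, cosSeries a θ ^ 2 * sin θ := by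
    rw [intervalIntegral.integral_comp_cos_smul_sin]
    simp only [smul_eq_mul, hφ_cos, mul_comm]
  have hweighted : ∫ x in (-1:ℝ)..1, φ x ^ 2 / √(1 - x ^ 2) = ∫ θ in 0..π, cosSeries a θ ^ 2 := by
    simp_rw [← hφ_cos]
    rw [← integral_measureT_eq_integral_cos (f := fun x => φ x ^ 2), integral_measureT]
    simp only [div_eq_mul_inv, sqrt_inv]
  have hmean : ∫ θ in 0..π, cosSeries a θ = π * a 0 := by
    simpa [mul_comm] using cosSeries.integral_mul_cos ha 0
  have hmean_sq := sq_integral_zero_pi_le (cosSeries.continuous ha)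
  have hsq := cosSeries.integral_sq_le ha ha'
  rw [hL2, hweighted, ge_iff_le, one_div, inv_mul_le_iff₀ pi_pos]
  rw [hmean] at hmean_sq
  set W := ∫ θ in 0..π, cosSeries a θ ^ 2
  set P := ∫ θ in 0..π, cosSeries a θ ^ 2 * sin θ
  set S := ∑' n : ℕ, (n : ℝ) * a n ^ 2
  have hπ := pi_gt_three
  have ha₀ : (π - 1) * π * a 0 ^ 2 ≤ (π - 2) * W + π * P :=
    le_of_mul_le_mul_left (by linarith) pi_pos
  linarith [mul_le_mul_of_nonneg_left hsq (by linarith : (0 : ℝ) ≤ π - 1)]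
end

section
/- For every integer n ≥ 1 and every y ∈ (0,π), the principal value (1/π) P.V. ∫_{0}^{π} sin(z) sin(nz) / (cos y − cos z) dz exists and equals cos(ny). -/
/-!
Write `Iₙ(z) = sin z sin(nz) / (cos y - cos z)`. Since
`sin((n+2)z) + sin(nz) = 2 sin((n+1)z) cos z` and `cos z = cos y - (cos y - cos z)`,
we get `Iₙ₊₂ = 2 cos y · Iₙ₊₁ - Iₙ - 2 sin z sin((n+1)z)`. The last term is continuous, and its
integral over `[0, π]` is `0` for `n ≥ 1` and `π/2` for `n = 0`, so the principal values satisfy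
the recurrence of `π cos(ny)`. For `n = 1`, `sin² z = sin² y + (cos y - cos z)(cos y + cos z)`
leaves the principal value of `1 / (cos y - cos z)`, which vanishes:
`(log |sin((z-y)/2)| - log |sin((z+y)/2)|) / sin y` is an antiderivative on both sides of `y`,
and the divergent terms `log |sin(ε/2)|` of the two sides cancel.
-/

open Filter Topology Real Set MeasureTheory intervalIntegral

noncomputable def truncatedIntegral (f : ℝ → ℝ) (a b y ε : ℝ) : ℝ :=
  (∫ z in a..y - ε, f z) + ∫ z in y + ε..b, f z

section Truncated

variable {f g F : ℝ → ℝ} {a b y L M : ℝ}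

theorem tendsto_truncatedIntegral_of_continuous (hf : Continuous f) (a b y : ℝ) :
    Tendsto (truncatedIntegral f a b y) (𝓝 0) (𝓝 (∫ z in a..b, f z)) := by
  have hint : ∀ c d, IntervalIntegrable f volume c d := hf.intervalIntegrable
  set G := fun c => ∫ z in a..c, f z
  have hG : Continuous G := continuous_primitive hint a
  have h : truncatedIntegral f a b y = fun ε => G (y - ε) + (G b - G (y + ε)) := by
    funext ε
    simp only [truncatedIntegral, G, integral_interval_sub_left (hint _ _) (hint _ _)]
  have hc : Continuous fun ε => G (y - ε) + (G b - G (y + ε)) := by fun_prop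
  rw [h]
  simpa using hc.tendsto 0

theorem eventually_uIcc_subset_Icc_diff (hay : a < y) (hyb : y < b) :
    ∀ᶠ ε in 𝓝[>] (0 : ℝ),
      uIcc a (y - ε) ⊆ Icc a b \ {y} ∧ uIcc (y + ε) b ⊆ Icc a b \ {y} := by
  filter_upwards [Ioo_mem_nhdsGT (lt_min (sub_pos.2 hay) (sub_pos.2 hyb))] with ε ⟨hε, hεy⟩
  have h₁ := min_le_left (y - a) (b - y)
  have h₂ := min_le_right (y - a) (b - y)
  rw [uIcc_of_le (by linarith), uIcc_of_le (by linarith)]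
  constructor <;> intro z ⟨hz₁, hz₂⟩ <;>
    exact ⟨⟨by linarith, by linarith⟩, fun h => by rw [mem_singleton_iff] at h; linarith⟩

theorem Filter.Tendsto.truncatedIntegral_congr (h : EqOn f g (Icc a b \ {y}))
    (hay : a < y) (hyb : y < b)
    (hf : Tendsto (truncatedIntegral f a b y) (𝓝[>] 0) (𝓝 L)) :
    Tendsto (truncatedIntegral g a b y) (𝓝[>] 0) (𝓝 L) := by
  refine hf.congr' ?_
  filter_upwards [eventually_uIcc_subset_Icc_diff hay hyb] with ε ⟨h₁, h₂⟩
  simp only [truncatedIntegral, integral_congr (h.mono h₁), integral_congr (h.mono h₂)]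

theorem eventually_intervalIntegrable_truncation (hf : ContinuousOn f (Icc a b \ {y}))
    (hay : a < y) (hyb : y < b) :
    ∀ᶠ ε in 𝓝[>] (0 : ℝ),
      IntervalIntegrable f volume a (y - ε) ∧ IntervalIntegrable f volume (y + ε) b := by
  filter_upwards [eventually_uIcc_subset_Icc_diff hay hyb] with ε ⟨h₁, h₂⟩
  exact ⟨(hf.mono h₁).intervalIntegrable, (hf.mono h₂).intervalIntegrable⟩

theorem Filter.Tendsto.truncatedIntegral_add (hf : ContinuousOn f (Icc a b \ {y}))
    (hg : ContinuousOn g (Icc a b \ {y})) (hay : a < y) (hyb : y < b)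
    (hfL : Tendsto (truncatedIntegral f a b y) (𝓝[>] 0) (𝓝 L))
    (hgM : Tendsto (truncatedIntegral g a b y) (𝓝[>] 0) (𝓝 M)) :
    Tendsto (truncatedIntegral (fun z => f z + g z) a b y) (𝓝[>] 0) (𝓝 (L + M)) := by
  refine (hfL.add hgM).congr' ?_
  filter_upwards [eventually_intervalIntegrable_truncation hf hay hyb,
    eventually_intervalIntegrable_truncation hg hay hyb]
    with ε ⟨hf₁, hf₂⟩ ⟨hg₁, hg₂⟩
  simp only [truncatedIntegral, integral_add hf₁ hg₁, integral_add hf₂ hg₂]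
  ring

theorem Filter.Tendsto.truncatedIntegral_sub (hf : ContinuousOn f (Icc a b \ {y}))
    (hg : ContinuousOn g (Icc a b \ {y})) (hay : a < y) (hyb : y < b)
    (hfL : Tendsto (truncatedIntegral f a b y) (𝓝[>] 0) (𝓝 L))
    (hgM : Tendsto (truncatedIntegral g a b y) (𝓝[>] 0) (𝓝 M)) :
    Tendsto (truncatedIntegral (fun z => f z - g z) a b y) (𝓝[>] 0) (𝓝 (L - M)) := by
  refine (hfL.sub hgM).congr' ?_
  filter_upwards [eventually_intervalIntegrable_truncation hf hay hyb,
    eventually_intervalIntegrable_truncation hg hay hyb]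
    with ε ⟨hf₁, hf₂⟩ ⟨hg₁, hg₂⟩
  simp only [truncatedIntegral, integral_sub hf₁ hg₁, integral_sub hf₂ hg₂]
  ring

theorem truncatedIntegral_const_mul (c : ℝ) :
    truncatedIntegral (fun z => c * f z) a b y = fun ε => c * truncatedIntegral f a b y ε := by
  funext ε
  simp only [truncatedIntegral, intervalIntegral.integral_const_mul, mul_add]

theorem Filter.Tendsto.truncatedIntegral_of_hasDerivAt
    (hF : ∀ z ∈ Icc a b \ {y}, HasDerivAt F (f z) z)
    (hf : ContinuousOn f (Icc a b \ {y})) (hay : a < y) (hyb : y < b)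
    (hFL : Tendsto (fun ε => F (y - ε) - F a + (F b - F (y + ε))) (𝓝[>] 0) (𝓝 L)) :
    Tendsto (truncatedIntegral f a b y) (𝓝[>] 0) (𝓝 L) := by
  refine hFL.congr' ?_
  filter_upwards [eventually_uIcc_subset_Icc_diff hay hyb] with ε ⟨h₁, h₂⟩
  rw [truncatedIntegral,
    integral_eq_sub_of_hasDerivAt (fun z hz => hF z (h₁ hz)) (hf.mono h₁).intervalIntegrable,
    integral_eq_sub_of_hasDerivAt (fun z hz => hF z (h₂ hz)) (hf.mono h₂).intervalIntegrable]

end Truncated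

section Airfoil

variable {y : ℝ}

theorem cos_sub_cos_ne_zero (hy : y ∈ Icc 0 π) {z : ℝ} (hz : z ∈ Icc 0 π \ {y}) :
    cos y - cos z ≠ 0 :=
  sub_ne_zero.2 fun h => hz.2 (injOn_cos hy hz.1 h).symm

theorem continuousOn_div_cos_sub_cos {g : ℝ → ℝ} (hg : Continuous g) (hy : y ∈ Icc 0 π) :
    ContinuousOn (fun z => g z / (cos y - cos z)) (Icc 0 π \ {y}) :=
  hg.continuousOn.div (by fun_prop) fun _ hz => cos_sub_cos_ne_zero hy hz

theorem hasDerivAt_log_sin_sub_log_sin {t : ℝ} (h₁ : sin ((t - y) / 2) ≠ 0)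
    (h₂ : sin ((t + y) / 2) ≠ 0) (hsy : sin y ≠ 0) :
    HasDerivAt (fun z => (log (sin ((z - y) / 2)) - log (sin ((z + y) / 2))) / sin y)
      (1 / (cos y - cos t)) t := by
  have hA := (((hasDerivAt_id' t).sub_const y).div_const 2).sin.log h₁
  have hB := (((hasDerivAt_id' t).add_const y).div_const 2).sin.log h₂
  refine ((hA.sub hB).div_const (sin y)).congr_deriv ?_
  have hsin : sin y =
      sin ((t + y) / 2) * cos ((t - y) / 2) - cos ((t + y) / 2) * sin ((t - y) / 2) := by
    rw [← sin_sub]; ring_nf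
  have hcos : cos y - cos t = 2 * sin ((t + y) / 2) * sin ((t - y) / 2) := by
    rw [cos_sub_cos, show (y - t) / 2 = -((t - y) / 2) by ring, sin_neg, add_comm y t]; ring
  rw [hcos]
  field_simp
  linear_combination -hsin

theorem sin_half_sub_ne_zero (hy : y ∈ Ioo 0 π) {t : ℝ} (ht : t ∈ Icc 0 π \ {y}) :
    sin ((t - y) / 2) ≠ 0 := by
  obtain ⟨⟨ht₀, htπ⟩, hty⟩ := ht
  rw [Ne, sin_eq_zero_iff_of_lt_of_lt (by linarith [hy.2]) (by linarith [hy.1])]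
  exact fun h => hty (by rw [mem_singleton_iff]; linarith)

theorem sin_half_add_pos (hy : y ∈ Ioo 0 π) {t : ℝ} (ht : t ∈ Icc 0 π) :
    0 < sin ((t + y) / 2) :=
  sin_pos_of_pos_of_lt_pi (by linarith [hy.1, ht.1]) (by linarith [hy.2, ht.2])

theorem tendsto_truncatedIntegral_one_div_cos_sub_cos (hy : y ∈ Ioo 0 π) :
    Tendsto (truncatedIntegral (fun z => 1 / (cos y - cos z)) 0 π y) (𝓝[>] 0) (𝓝 0) := by
  have hs : 0 < sin y := sin_pos_of_pos_of_lt_pi hy.1 hy.2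
  -- `Real.log` is `log |·|`, so `F` is an antiderivative on both sides of `y`.
  set F := fun z => (log (sin ((z - y) / 2)) - log (sin ((z + y) / 2))) / sin y
  refine Tendsto.truncatedIntegral_of_hasDerivAt (F := F)
    (fun t ht => hasDerivAt_log_sin_sub_log_sin (sin_half_sub_ne_zero hy ht)
      (sin_half_add_pos hy ht.1).ne' hs.ne')
    (continuousOn_div_cos_sub_cos continuous_const (Ioo_subset_Icc_self hy)) hy.1 hy.2 ?_
  have hF : ∀ ε, F (y - ε) - F 0 + (F π - F (y + ε))
      = (log (sin (y + ε / 2)) - log (sin (y - ε / 2))) / sin y := by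
    intro ε
    simp only [F]
    rw [show (y - ε - y) / 2 = -(ε / 2) by ring, show (0 - y) / 2 = -(y / 2) by ring,
      show (π + y) / 2 = π - (π - y) / 2 by ring, show (y + ε - y) / 2 = ε / 2 by ring,
      show (y - ε + y) / 2 = y - ε / 2 by ring, show (y + ε + y) / 2 = y + ε / 2 by ring,
      sin_neg, sin_neg, log_neg_eq_log, log_neg_eq_log, sin_pi_sub, zero_add]
    ring
  have hcont :
      ContinuousAt (fun ε => (log (sin (y + ε / 2)) - log (sin (y - ε / 2))) / sin y) 0 :=
    ((ContinuousAt.log (by fun_prop) (by simpa using hs.ne')).sub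
      (ContinuousAt.log (by fun_prop) (by simpa using hs.ne'))).div_const _
  simp only [hF]
  simpa using hcont.tendsto.mono_left nhdsWithin_le_nhds

theorem integral_cos_nat_mul_eq_zero {j : ℕ} (hj : j ≠ 0) :
    ∫ z in 0..π, cos (j * z) = 0 := by
  simp [integral_comp_mul_left (fun x => cos x) (Nat.cast_ne_zero.2 hj), integral_cos,
    sin_nat_mul_pi]

theorem integral_sin_mul_sin_nat_add_two (k : ℕ) :
    ∫ z in 0..π, sin z * sin ((k + 2 : ℕ) * z) = 0 := by
  have h : ∀ z, sin z * sin ((k + 2 : ℕ) * z)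
      = (cos ((k + 1 : ℕ) * z) - cos ((k + 3 : ℕ) * z)) / 2 := by
    intro z
    push_cast
    rw [show ((k : ℝ) + 1) * z = (k + 2) * z - z by ring,
      show ((k : ℝ) + 3) * z = (k + 2) * z + z by ring, cos_sub, cos_add]
    ring
  simp only [h]
  rw [intervalIntegral.integral_div,
    intervalIntegral.integral_sub (Continuous.intervalIntegrable (by fun_prop) _ _)
      (Continuous.intervalIntegrable (by fun_prop) _ _),
    integral_cos_nat_mul_eq_zero (by omega), integral_cos_nat_mul_eq_zero (by omega)]
  simp

end Airfoil

noncomputable def airfoilSinIntegrand (y : ℝ) (n : ℕ) (z : ℝ) : ℝ :=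
  sin z * sin (n * z) / (cos y - cos z)

section AirfoilSinIntegrand

variable {y : ℝ}

theorem continuousOn_airfoilSinIntegrand (hy : y ∈ Icc 0 π) (n : ℕ) :
    ContinuousOn (airfoilSinIntegrand y n) (Icc 0 π \ {y}) :=
  continuousOn_div_cos_sub_cos (by fun_prop) hy

theorem airfoilSinIntegrand_one_eqOn (hy : y ∈ Icc 0 π) :
    EqOn (fun z => sin y ^ 2 * (1 / (cos y - cos z)) + (cos y + cos z))
      (airfoilSinIntegrand y 1) (Icc 0 π \ {y}) := by
  intro z hz
  have hD := cos_sub_cos_ne_zero hy hz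
  simp only [airfoilSinIntegrand, Nat.cast_one, one_mul]
  field_simp
  linear_combination sin_sq_add_cos_sq y - sin_sq_add_cos_sq z

theorem airfoilSinIntegrand_add_two_eqOn (hy : y ∈ Icc 0 π) (n : ℕ) :
    EqOn (fun z => 2 * cos y * airfoilSinIntegrand y (n + 1) z - airfoilSinIntegrand y n z
        - 2 * (sin z * sin ((n + 1 : ℕ) * z)))
      (airfoilSinIntegrand y (n + 2)) (Icc 0 π \ {y}) := by
  intro z hz
  have hD := cos_sub_cos_ne_zero hy hz
  have hsin : sin ((n + 2 : ℕ) * z) + sin (n * z) = 2 * sin ((n + 1 : ℕ) * z) * cos z := by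
    push_cast
    rw [show ((n : ℝ) + 2) * z = (n + 1) * z + z by ring,
      show (n : ℝ) * z = (n + 1) * z - z by ring, sin_add, sin_sub]
    ring
  simp only [airfoilSinIntegrand]
  field_simp
  linear_combination (norm := ring_nf) (-sin z) * hsin

theorem tendsto_truncatedIntegral_airfoilSinIntegrand_one (hy : y ∈ Ioo 0 π) :
    Tendsto (truncatedIntegral (airfoilSinIntegrand y 1) 0 π y) (𝓝[>] 0)
      (𝓝 (π * cos y)) := by
  have hy' := Ioo_subset_Icc_self hy
  have hsing := (tendsto_truncatedIntegral_one_div_cos_sub_cos hy).const_mul (sin y ^ 2)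
  rw [← truncatedIntegral_const_mul] at hsing
  have hreg := (tendsto_truncatedIntegral_of_continuous (f := fun z => cos y + cos z)
    (by fun_prop) 0 π y).mono_left (nhdsWithin_le_nhds (s := Ioi 0))
  have h := (hsing.truncatedIntegral_add
    ((continuousOn_div_cos_sub_cos continuous_const hy').const_smul (sin y ^ 2))
    (by fun_prop) hy.1 hy.2 hreg).truncatedIntegral_congr
    (airfoilSinIntegrand_one_eqOn hy') hy.1 hy.2
  convert h using 2
  simp [intervalIntegral.integral_add, integral_cos]

theorem tendsto_truncatedIntegral_airfoilSinIntegrand_add_two (hy : y ∈ Ioo 0 π) {n : ℕ}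
    {L M : ℝ}
    (hL : Tendsto (truncatedIntegral (airfoilSinIntegrand y n) 0 π y) (𝓝[>] 0) (𝓝 L))
    (hM : Tendsto (truncatedIntegral (airfoilSinIntegrand y (n + 1)) 0 π y) (𝓝[>] 0) (𝓝 M)) :
    Tendsto (truncatedIntegral (airfoilSinIntegrand y (n + 2)) 0 π y) (𝓝[>] 0)
      (𝓝 (2 * cos y * M - L - 2 * ∫ z in 0..π, sin z * sin ((n + 1 : ℕ) * z))) := by
  have hy' := Ioo_subset_Icc_self hy
  have hcont := continuousOn_airfoilSinIntegrand hy'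
  have hM' := hM.const_mul (2 * cos y)
  rw [← truncatedIntegral_const_mul] at hM'
  have hreg := ((tendsto_truncatedIntegral_of_continuous
    (f := fun z => sin z * sin ((n + 1 : ℕ) * z)) (by fun_prop) 0 π y).mono_left
    (nhdsWithin_le_nhds (s := Ioi 0))).const_mul 2
  rw [← truncatedIntegral_const_mul] at hreg
  have hlead : ContinuousOn (fun z => 2 * cos y * airfoilSinIntegrand y (n + 1) z)
      (Icc 0 π \ {y}) :=
    continuousOn_const.mul (hcont _)
  have hsub := hM'.truncatedIntegral_sub hlead (hcont n) hy.1 hy.2 hL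
  exact (hsub.truncatedIntegral_sub (hlead.sub (hcont n)) (by fun_prop) hy.1 hy.2
    hreg).truncatedIntegral_congr (airfoilSinIntegrand_add_two_eqOn hy' n) hy.1 hy.2

theorem tendsto_truncatedIntegral_airfoilSinIntegrand_succ (hy : y ∈ Ioo 0 π) (n : ℕ) :
    Tendsto (truncatedIntegral (airfoilSinIntegrand y (n + 1)) 0 π y) (𝓝[>] 0)
      (𝓝 (π * cos ((n + 1 : ℕ) * y))) := by
  induction n using Nat.twoStepInduction with
  | zero => simpa using tendsto_truncatedIntegral_airfoilSinIntegrand_one hy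
  | one =>
    have hzero : truncatedIntegral (airfoilSinIntegrand y 0) 0 π y = fun _ => 0 := by
      funext ε
      simp [truncatedIntegral, airfoilSinIntegrand]
    have h := tendsto_truncatedIntegral_airfoilSinIntegrand_add_two hy
      (hzero ▸ tendsto_const_nhds) (tendsto_truncatedIntegral_airfoilSinIntegrand_one hy)
    convert h using 2
    push_cast
    simp only [one_mul, ← sq, integral_sin_sq]
    rw [sin_zero, sin_pi, cos_two_mul]
    ring
  | more n h₀ h₁ =>
    convert tendsto_truncatedIntegral_airfoilSinIntegrand_add_two hy h₀ h₁ using 2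
    rw [integral_sin_mul_sin_nat_add_two]
    push_cast
    rw [show ((n : ℝ) + 2 + 1) * y = (n + 2) * y + y by ring,
      show ((n : ℝ) + 1) * y = (n + 2) * y - y by ring, show (n : ℝ) + 1 + 1 = n + 2 by ring,
      cos_add, cos_sub]
    ring

end AirfoilSinIntegrand

/-- Airfoil-operator identity `K sin(n·) = cos(n·)`: for `n ≥ 1` and `y ∈ (0,π)`, the
principal value `(1/π) P.V. ∫₀^π sin(z) sin(nz)/(cos y − cos z) dz` exists and equals
`cos(ny)`. -/
theorem airfoil_K_sin (n : ℕ) (hn : 1 ≤ n) (y : ℝ) (hy : y ∈ Set.Ioo 0 Real.pi) :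
    Tendsto
      (fun ε : ℝ =>
        (1 / Real.pi) *
          ((∫ z in (0:ℝ)..(y - ε), Real.sin z * Real.sin (n * z) / (Real.cos y - Real.cos z)) +
           ∫ z in (y + ε)..Real.pi, Real.sin z * Real.sin (n * z) / (Real.cos y - Real.cos z)))
      (nhdsWithin 0 (Set.Ioi 0)) (nhds (Real.cos (n * y))) := by
  obtain ⟨k, rfl⟩ := Nat.exists_eq_add_of_le' hn
  have h := (tendsto_truncatedIntegral_airfoilSinIntegrand_succ hy k).const_mul (1 / π)
  rwa [← mul_assoc, one_div_mul_cancel pi_ne_zero, one_mul] at h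
end
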